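/- arXiv:1811.05936 — 4 statements merged into one kernel-verified Lean document; each statement's English description precedes it below -/
import Mathlib

section
/- Let G be a finite group, let σ : G → Sym(G) and λ : G → Sym(G) be, respectively, the right and the left regular representations of G, and let H ≤ G. Then the centraliser in Sym(G) of the image H^σ of H under the right regular representation equals the natural image in Sym(G) of the permutational wreath product H^λ ≀ Sym(G/H), where G/H denotes the set of left cosets of H in G (the base group H^λ acting independently on each left coset and Sym(G/H) permuting the cosets). -/
open Equiv

/-- The image `H^σ` of a subgroup `H ≤ G` under the right regular representation
`σ : G → Sym(G)`, `g ↦ (x ↦ x * g)`. -/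
def rightRegImage {G : Type*} [Group G] (H : Subgroup G) : Subgroup (Equiv.Perm G) where
  carrier := {f | ∃ h ∈ H, ∀ x, f x = x * h}
  one_mem' := ⟨1, H.one_mem, fun x => by simp⟩
  mul_mem' := by
    rintro a b ⟨h, hh, ha⟩ ⟨h', hh', hb⟩
    exact ⟨h' * h, H.mul_mem hh' hh, fun x => by
      simp [Equiv.Perm.mul_apply, ha, hb, mul_assoc]⟩
  inv_mem' := by
    rintro a ⟨h, hh, ha⟩
    refine ⟨h⁻¹, H.inv_mem hh, fun x => a.injective ?_⟩
    rw [← Equiv.Perm.mul_apply, mul_inv_cancel, Equiv.Perm.one_apply, ha, inv_mul_cancel_right]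

/-- The natural image in `Sym(G)` of the permutational wreath product
`H^λ ≀ Sym(G/H)` acting imprimitively on `G`, with blocks the left cosets of `H`:
writing each element of `G` as `q.out * h` with `q` a left coset and `h ∈ H`, an
element of the wreath product sends `q.out * h` to `(π q).out * (b q * h)`, where
`π` permutes the left cosets and `b q ∈ H` acts on the block `q` as an element of
the image `H^λ` of the left regular representation of `H`. -/
def wreathProductImage {G : Type*} [Group G] (H : Subgroup G) : Subgroup (Equiv.Perm G) where
  carrier := {f | ∃ (π : Equiv.Perm (G ⧸ H)) (b : G ⧸ H → H),
    ∀ (q : G ⧸ H) (h : H), f (q.out * h) = (π q).out * ((b q * h : H) : G)}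
  one_mem' := ⟨1, fun _ => 1, fun q h => by simp⟩
  mul_mem' := by
    rintro f f' ⟨π, b, hf⟩ ⟨π', b', hf'⟩
    refine ⟨π * π', fun q => b (π' q) * b' q, fun q h => ?_⟩
    rw [Equiv.Perm.mul_apply, hf', hf, Equiv.Perm.mul_apply, mul_assoc]
  inv_mem' := by
    rintro f ⟨π, b, hf⟩
    refine ⟨π⁻¹, fun q => (b (π⁻¹ q))⁻¹, fun q h => f.injective ?_⟩
    rw [← Equiv.Perm.mul_apply, mul_inv_cancel, Equiv.Perm.one_apply, hf, ← Equiv.Perm.mul_apply,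
      mul_inv_cancel, Equiv.Perm.one_apply, mul_inv_cancel_left]

/-!
Both subgroups consist of the permutations `f` of `G` with `f (x * h) = f x * h` for all `x ∈ G`
and `h ∈ H`; for the centraliser this is the definition. Such an `f` satisfies
`(f x)⁻¹ * f y = x⁻¹ * y` whenever either side lies in `H`, so it permutes the left cosets, say
by `π`, and then `f (q.out * h) = (π q).out * (b q * h)` with `b q = (π q).out⁻¹ * f q.out ∈ H`.
Conversely, the wreath product action visibly commutes with right multiplication by `H`.
-/

section

variable {G : Type*} [Group G] {H : Subgroup G}

theorem mem_centralizer_rightRegImage_iff {f : Perm G} :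
    f ∈ Subgroup.centralizer (rightRegImage H : Set (Perm G)) ↔
      ∀ x, ∀ h ∈ H, f (x * h) = f x * h := by
  rw [Subgroup.mem_centralizer_iff]
  constructor
  · intro hf x h hh
    exact (DFunLike.congr_fun (hf (Equiv.mulRight h) ⟨h, hh, fun _ => rfl⟩) x).symm
  · rintro hf p ⟨h, hh, hp⟩
    ext x
    simp only [Perm.mul_apply, hp, hf x h hh]

theorem inv_mul_apply_mem_iff {f : Perm G} (hf : ∀ x, ∀ h ∈ H, f (x * h) = f x * h) (x y : G) :
    (f x)⁻¹ * f y ∈ H ↔ x⁻¹ * y ∈ H := by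
  constructor
  · intro hk
    have hy : y = x * ((f x)⁻¹ * f y) :=
      f.injective (by rw [hf _ _ hk, mul_inv_cancel_left])
    rwa [hy, inv_mul_cancel_left]
  · intro hk
    rwa [← mul_inv_cancel_left x y, hf _ _ hk, inv_mul_cancel_left]

def cosetPerm (f : Perm G) (hf : ∀ x, ∀ h ∈ H, f (x * h) = f x * h) : Perm (G ⧸ H) :=
  Quotient.congr f fun x y => by
    simp only [QuotientGroup.leftRel_apply, inv_mul_apply_mem_iff hf]

theorem cosetPerm_mk {f : Perm G} (hf : ∀ x, ∀ h ∈ H, f (x * h) = f x * h) (x : G) :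
    cosetPerm f hf (x : G ⧸ H) = (f x : G ⧸ H) :=
  rfl

theorem mem_wreathProductImage_iff {f : Perm G} :
    f ∈ wreathProductImage H ↔ ∀ x, ∀ h ∈ H, f (x * h) = f x * h := by
  constructor
  · rintro ⟨π, b, hf⟩ x h hh
    set q : G ⧸ H := QuotientGroup.mk x
    let k : H := ⟨q.out⁻¹ * x, QuotientGroup.eq.mp q.out_eq'⟩
    have hx : x = q.out * k := (mul_inv_cancel_left _ _).symm
    calc f (x * h) = f (q.out * (k * ⟨h, hh⟩ : H)) := by rw [hx, Subgroup.coe_mul, mul_assoc]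
      _ = f x * h := by rw [hf, hx, hf]; simp only [Subgroup.coe_mul, mul_assoc]
  · intro hf
    have hb (q : G ⧸ H) : (cosetPerm f hf q).out⁻¹ * f q.out ∈ H := by
      rw [← QuotientGroup.eq, QuotientGroup.out_eq', ← cosetPerm_mk hf, QuotientGroup.out_eq']
    refine ⟨cosetPerm f hf, fun q => ⟨_, hb q⟩, fun q h => ?_⟩
    rw [hf _ _ h.2, Subgroup.coe_mul, ← mul_assoc, mul_inv_cancel_left]

end

theorem centralizer_rightRegImage_eq_wreathProductImage_general
    (G : Type*) [Group G] (H : Subgroup G) :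
    Subgroup.centralizer (rightRegImage H : Set (Equiv.Perm G)) = wreathProductImage H := by
  ext f
  rw [mem_centralizer_rightRegImage_iff, mem_wreathProductImage_iff]

/-- The centraliser in `Sym(G)` of the image `H^σ` of `H` under the right regular
representation equals the natural image in `Sym(G)` of the permutational wreath
product `H^λ ≀ Sym(G/H)`, where `G/H` is the set of left cosets of `H` in `G`. -/
theorem centralizer_rightRegImage_eq_wreathProductImage
    (G : Type*) [Group G] [Finite G] (H : Subgroup G) :
    Subgroup.centralizer (rightRegImage H : Set (Equiv.Perm G)) = wreathProductImage H :=
  centralizer_rightRegImage_eq_wreathProductImage_general G H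
end

section
/- Let n > 2, let V = 𝔽₂ⁿ, let 0 ≤ m ≤ n, and let M be a subgroup of the translation group T of order 2^{n−m}. Then the centraliser of M in Sym(V) has order (2^m)! · 2^{2^m (n−m)}. -/
/-!
Let `W ≤ V` be the set of translation vectors of `M`. A permutation centralising `M` commutes
with every translation by `W`, so it permutes the cosets of `W` and maps each coset onto another
by a translation. Choosing coset representatives identifies `V` with `(V ⧸ W) × W` and these
permutations with the maps `(q, x) ↦ (σ q, a q + x)` for `σ ∈ Sym(V ⧸ W)` and `a : V ⧸ W → W`.
Hence the centraliser has order `|V ⧸ W|! · |W| ^ |V ⧸ W| = (2^m)! · (2^(n-m)) ^ (2^m)`.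
-/

open Equiv

/-- `V n` is the `n`-dimensional vector space over the field with two elements. -/
abbrev V (n : ℕ) : Type := Fin n → ZMod 2

/-- The subgroup `σ_W` of `Sym(V)` consisting of the translations `x ↦ x + w` with `w ∈ W`. -/
def sigmaSub (n : ℕ) (W : Submodule (ZMod 2) (V n)) : Subgroup (Equiv.Perm (V n)) where
  carrier := {g | ∃ v ∈ W, ∀ x, g x = x + v}
  one_mem' := ⟨0, W.zero_mem, fun x => by simp⟩
  mul_mem' := by
    rintro a b ⟨v, hv, ha⟩ ⟨w, hw, hb⟩
    exact ⟨w + v, W.add_mem hw hv, fun x => by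
      simp [Equiv.Perm.mul_apply, ha, hb, add_assoc]⟩
  inv_mem' := by
    rintro a ⟨v, hv, ha⟩
    refine ⟨-v, W.neg_mem hv, fun x => a.injective ?_⟩
    rw [Equiv.Perm.coe_inv, Equiv.apply_symm_apply, ha]
    abel

/-- The translation group `T`, i.e. the image of the right regular representation
of `(V, +)` in `Sym(V)`. -/
def T (n : ℕ) : Subgroup (Equiv.Perm (V n)) := sigmaSub n ⊤

/-- The affine group `AGL(V) = T ⋊ GL(V)`, consisting of the invertible affine
transformations `x ↦ L x + v` of `V`. -/
def AGL (n : ℕ) : Subgroup (Equiv.Perm (V n)) where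
  carrier := {g | ∃ (L : V n ≃ₗ[ZMod 2] V n) (v : V n), ∀ x, g x = L x + v}
  one_mem' := ⟨LinearEquiv.refl _ _, 0, fun x => by simp⟩
  mul_mem' := by
    rintro a b ⟨L, v, ha⟩ ⟨M, w, hb⟩
    exact ⟨M ≪≫ₗ L, L w + v, fun x => by
      simp [Equiv.Perm.mul_apply, ha, hb, map_add, add_assoc]⟩
  inv_mem' := by
    rintro a ⟨L, v, ha⟩
    refine ⟨L.symm, -(L.symm v), fun x => a.injective ?_⟩
    rw [Equiv.Perm.coe_inv, Equiv.apply_symm_apply, ha, map_add, map_neg, LinearEquiv.apply_symm_apply,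
      LinearEquiv.apply_symm_apply]
    abel

/-- The conjugate subgroup `H^g = g⁻¹ H g`. -/
def conjSub {G : Type*} [Group G] (H : Subgroup G) (g : G) : Subgroup G :=
  H.map (MulAut.conj g⁻¹).toMonoidHom

/-- A subgroup of `Sym(V)` is an elementary abelian regular subgroup if it is an
elementary abelian 2-group (every element squares to the identity) acting
regularly (sharply transitively) on `V`. -/
def IsElemAbelianRegular (n : ℕ) (R : Subgroup (Equiv.Perm (V n))) : Prop :=
  (∀ r ∈ R, r * r = 1) ∧ ∀ x y : V n, ∃! r : R, (r : Equiv.Perm (V n)) x = y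

/-- `A` is a normal subgroup of `B` (as subgroups of a common ambient group). -/
def NormalIn {G : Type*} [Group G] (A B : Subgroup G) : Prop :=
  A ≤ B ∧ ∀ b ∈ B, ∀ a ∈ A, b * a * b⁻¹ ∈ A

/-- `S` is a Sylow `2`-subgroup of `K` (as subgroups of a common ambient group):
`S` is a `2`-subgroup of `K` maximal among the `2`-subgroups of `K`. -/
def IsSylow2Of {G : Type*} [Group G] (S K : Subgroup G) : Prop :=
  S ≤ K ∧ IsPGroup 2 S ∧ ∀ Q : Subgroup G, Q ≤ K → IsPGroup 2 Q → S ≤ Q → Q = S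


open Nat

section FiberTranslations

variable {Q H : Type*} [AddGroup H]

lemma apply_eq_of_commute_fiber_addRight {g : Perm (Q × H)}
    (hg : ∀ p : Q × H, ∀ h, g (p.1, p.2 + h) = ((g p).1, (g p).2 + h)) (q : Q) (x : H) :
    g (q, x) = ((g (q, 0)).1, (g (q, 0)).2 + x) := by
  simpa using hg (q, 0) x

theorem bijective_prodShear_addLeft :
    Function.Bijective fun p : Perm Q × (Q → H) =>
      (⟨prodShear p.1 (fun q => Equiv.addLeft (p.2 q)), fun _ _ => by simp [add_assoc]⟩ :
        {g : Perm (Q × H) // ∀ p : Q × H, ∀ h, g (p.1, p.2 + h) = ((g p).1, (g p).2 + h)}) := by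
  constructor
  · rintro ⟨σ, a⟩ ⟨τ, b⟩ hστ
    have hq : ∀ q, σ q = τ q ∧ a q = b q := fun q => by
      simpa using congr($(congrArg Subtype.val hστ) (q, 0))
    exact Prod.ext (Equiv.ext fun q => (hq q).1) (funext fun q => (hq q).2)
  · rintro ⟨g, hg⟩
    have hg' := apply_eq_of_commute_fiber_addRight hg
    let σ : Q → Q := fun q => (g (q, 0)).1
    have hσ : Function.Bijective σ := by
      constructor
      · intro q q' hqq'
        have : g (q', -(g (q', 0)).2 + (g (q, 0)).2) = g (q, 0) := by
          rw [hg' q']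
          exact Prod.ext hqq'.symm (by simp)
        exact (Prod.mk.inj (g.injective this)).1.symm
      · intro r
        obtain ⟨⟨q, x⟩, hqx⟩ := g.surjective (r, 0)
        exact ⟨q, by rw [hg' q x] at hqx; exact congrArg Prod.fst hqx⟩
    refine ⟨(ofBijective σ hσ, fun q => (g (q, 0)).2), Subtype.ext (Equiv.ext fun p => ?_)⟩
    simp [σ, hg' p.1 p.2]

theorem card_perm_prod_commute_fiber_addRight [Finite Q] :
    Nat.card {g : Perm (Q × H) // ∀ p : Q × H, ∀ h, g (p.1, p.2 + h) = ((g p).1, (g p).2 + h)} =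
      (Nat.card Q)! * Nat.card H ^ Nat.card Q := by
  rw [← Nat.card_eq_of_bijective _ bijective_prodShear_addLeft, Nat.card_prod, Nat.card_perm,
    Nat.card_fun]

end FiberTranslations

namespace AddSubgroup

variable {G : Type*} [AddGroup G] (W : AddSubgroup G)

/-- Unlike `AddSubgroup.addGroupEquivQuotientProdAddSubgroup`, this has the explicit inverse
`(q, w) ↦ q.out + w`, so right translation by `w ∈ W` visibly becomes translation of the
second factor. -/
noncomputable def equivQuotientProd : G ≃ (G ⧸ W) × W where
  toFun x :=
    ((x : G ⧸ W), ⟨-(x : G ⧸ W).out + x, QuotientAddGroup.eq.mp (QuotientAddGroup.out_eq' _)⟩)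
  invFun p := p.1.out + p.2
  left_inv x := by simp
  right_inv := by
    rintro ⟨q, w⟩
    have hq : ((q.out + w : G) : G ⧸ W) = q := by
      rw [QuotientAddGroup.mk_add_of_mem _ w.2, QuotientAddGroup.out_eq']
    ext <;> simp [hq]

lemma equivQuotientProd_add (x : G) (w : W) :
    W.equivQuotientProd (x + w) = ((W.equivQuotientProd x).1, (W.equivQuotientProd x).2 + w) := by
  ext <;> simp [equivQuotientProd, QuotientAddGroup.mk_add_of_mem _ w.2, add_assoc]

theorem commute_addRight_iff_permCongr (g : Perm G) :
    (∀ w ∈ W, ∀ x, g (x + w) = g x + w) ↔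
      ∀ p h, W.equivQuotientProd.permCongr g (p.1, p.2 + h) =
        ((W.equivQuotientProd.permCongr g p).1, (W.equivQuotientProd.permCongr g p).2 + h) := by
  set e := W.equivQuotientProd
  constructor
  · intro hg p h
    obtain ⟨x, rfl⟩ := e.surjective p
    rw [permCongr_apply, permCongr_apply, ← equivQuotientProd_add, e.symm_apply_apply,
      e.symm_apply_apply, hg _ h.2, equivQuotientProd_add]
  · intro hg w hw x
    apply e.injective
    have := hg (e x) ⟨w, hw⟩
    rwa [← equivQuotientProd_add, permCongr_apply, permCongr_apply, e.symm_apply_apply,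
      e.symm_apply_apply, ← equivQuotientProd_add] at this

theorem card_perm_commute_addRight [Finite (G ⧸ W)] :
    Nat.card {g : Perm G // ∀ w ∈ W, ∀ x, g (x + w) = g x + w} =
      (Nat.card (G ⧸ W))! * Nat.card W ^ Nat.card (G ⧸ W) := by
  rw [← card_perm_prod_commute_fiber_addRight]
  exact Nat.card_congr (W.equivQuotientProd.permCongr.subtypeEquiv W.commute_addRight_iff_permCongr)

end AddSubgroup

section Translations

variable {G : Type*} [AddCommGroup G]

def translationAddSubgroup (M : Subgroup (Perm G)) : AddSubgroup G where
  carrier := {v | Equiv.addRight v ∈ M}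
  add_mem' ha hb := by simpa using M.mul_mem hb ha
  zero_mem' := by simp [M.one_mem]
  neg_mem' ha := by simpa using M.inv_mem ha

variable {M : Subgroup (Perm G)} (hM : ∀ g ∈ M, ∃ v, g = Equiv.addRight v)
include hM

theorem mem_centralizer_iff_commute_addRight (g : Perm G) :
    g ∈ Subgroup.centralizer (M : Set (Perm G)) ↔
      ∀ w ∈ translationAddSubgroup M, ∀ x, g (x + w) = g x + w := by
  rw [Subgroup.mem_centralizer_iff]
  constructor
  · intro hg w hw x
    exact (DFunLike.congr_fun (hg _ hw) x).symm
  · intro hg h hh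
    obtain ⟨v, rfl⟩ := hM h hh
    exact Equiv.ext fun x => (hg v hh x).symm

theorem card_translationAddSubgroup : Nat.card (translationAddSubgroup M) = Nat.card M := by
  refine Nat.card_congr (Equiv.ofBijective (fun v => ⟨Equiv.addRight (v : G), v.2⟩) ⟨?_, ?_⟩)
  · intro v w hvw
    simpa using DFunLike.congr_fun (congrArg Subtype.val hvw) 0
  · rintro ⟨g, hg⟩
    obtain ⟨v, rfl⟩ := hM g hg
    exact ⟨⟨v, hg⟩, rfl⟩

end Translations

theorem card_centralizer_of_subgroup_of_translations_general
    (n m : ℕ) (hm : m ≤ n)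
    (M : Subgroup (Equiv.Perm (V n))) (hMT : M ≤ T n)
    (hcard : Nat.card M = 2 ^ (n - m)) :
    Nat.card (Subgroup.centralizer (M : Set (Equiv.Perm (V n)))) =
      Nat.factorial (2 ^ m) * 2 ^ (2 ^ m * (n - m)) := by
  have hM : ∀ g ∈ M, ∃ v, g = Equiv.addRight v := fun g hg => by
    obtain ⟨v, -, hv⟩ := hMT hg
    exact ⟨v, Equiv.ext hv⟩
  set W := translationAddSubgroup M
  have hW : Nat.card W = 2 ^ (n - m) := (card_translationAddSubgroup hM).trans hcard
  have hQ : Nat.card (V n ⧸ W) = 2 ^ m := by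
    have hV : 2 ^ m * 2 ^ (n - m) = Nat.card (V n ⧸ W) * 2 ^ (n - m) := by
      rw [← pow_add, Nat.add_sub_cancel' hm, ← hW, ← W.card_eq_card_quotient_mul_card_addSubgroup]
      simp
    exact (Nat.eq_of_mul_eq_mul_right (by positivity) hV).symm
  rw [Nat.card_congr (Equiv.subtypeEquivRight (mem_centralizer_iff_commute_addRight hM)),
    W.card_perm_commute_addRight, hQ, hW, ← pow_mul, mul_comm (n - m)]

/-- If `M ≤ T` has order `2^(n-m)`, then `|C_{Sym(V)}(M)| = (2^m)! · 2^(2^m (n-m))`. -/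
theorem card_centralizer_of_subgroup_of_translations
    (n m : ℕ) (hn : 2 < n) (hm : m ≤ n)
    (M : Subgroup (Equiv.Perm (V n))) (hMT : M ≤ T n)
    (hcard : Nat.card M = 2 ^ (n - m)) :
    Nat.card (Subgroup.centralizer (M : Set (Equiv.Perm (V n)))) =
      Nat.factorial (2 ^ m) * 2 ^ (2 ^ m * (n - m)) :=
  card_centralizer_of_subgroup_of_translations_general n m hm M hMT hcard
end

section
/- Let n > 2, let V = 𝔽₂ⁿ, and let M be any maximal subgroup of the translation group T (i.e. a subgroup of index 2 in T). Then the centraliser C_{Sym(V)}(M) is a proper subgroup of the affine group AGL(V), and moreover |C_{Sym(V)}(M)| = 2^{2n−1}. -/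
/-!
Since `M` has index 2 in `T`, it is the group of translations by a hyperplane `W = ker f`.
A permutation `g` commuting with these translations satisfies `g (x + w) = g x + w` for `w ∈ W`,
so `g x - x` is constant on each of the two cosets of `W`: `g x = x + f x • d + c`.
Injectivity of `g` forces `f d = 0`, so `g` is a transvection followed by a translation, hence
affine, and the `2^(n-1) · 2^n` pairs `(d, c) ∈ W × V` give distinct elements of the
centraliser.
As `n ≥ 2`, some transvection moves a nonzero vector of `W`; it lies in `AGL(V)` but does not
commute with the translation by that vector.
-/

open Equiv

open Module LinearMap

theorem ZMod.eq_zero_or_eq_one (a : ZMod 2) : a = 0 ∨ a = 1 := by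
  revert a
  decide

section ZModTwoModule

variable {E : Type*} [AddCommGroup E] [Module (ZMod 2) E]

theorem Submodule.exists_surjective_dual_ker_eq_of_card_quotient_eq_two [Finite E]
    {W : Submodule (ZMod 2) E} (hW : Nat.card (E ⧸ W) = 2) :
    ∃ f : Dual (ZMod 2) E, Function.Surjective f ∧ ker f = W := by
  have hrank : finrank (ZMod 2) (E ⧸ W) = finrank (ZMod 2) (ZMod 2) := by
    have h := Module.natCard_eq_pow_finrank (K := ZMod 2) (V := E ⧸ W)
    rw [hW, Nat.card_zmod] at h
    rw [finrank_self]
    exact (Nat.pow_right_injective le_rfl (h.symm.trans (pow_one 2).symm))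
  let e := LinearEquiv.ofFinrankEq _ _ hrank
  exact ⟨e.toLinearMap ∘ₗ W.mkQ, e.surjective.comp W.mkQ_surjective, by
    rw [LinearEquiv.ker_comp, Submodule.ker_mkQ]⟩

variable {f : Dual (ZMod 2) E}

theorem apply_eq_add_smul_add_of_forall_add {v₀ : E} (hv₀ : f v₀ = 1) {g : E → E}
    (hg : ∀ w ∈ ker f, ∀ x, g (x + w) = g x + w) (x : E) :
    g x = x + f x • (g v₀ - v₀ - g 0) + g 0 := by
  obtain hx | hx := ZMod.eq_zero_or_eq_one (f x)
  · simpa [hx, add_comm] using hg x hx 0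
  · have h := hg (x - v₀) (by simp [hx, hv₀]) v₀
    rw [add_sub_cancel] at h
    rw [h, hx, one_smul]
    abel

theorem apply_eq_zero_of_injective_add_smul_add {d c : E}
    (h : Function.Injective fun x => x + f x • d + c) : f d = 0 := by
  obtain hd | hd := ZMod.eq_zero_or_eq_one (f d)
  · exact hd
  · have hd0 : d = 0 := h (by simp [hd, ZModModule.add_self])
    simp [hd0] at hd

end ZModTwoModule

theorem Pi.exists_linearEquiv_apply_ne {ι R : Type*} [Ring R] [DecidableEq ι] [Nontrivial ι]
    {w : ι → R} (hw : w ≠ 0) : ∃ L : (ι → R) ≃ₗ[R] (ι → R), L w ≠ w := by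
  obtain ⟨i, hi⟩ := Function.ne_iff.1 hw
  obtain ⟨j, hji⟩ := exists_ne i
  have h : (proj i : Dual R (ι → R)) (Pi.single j 1) = 0 := Pi.single_eq_of_ne hji.symm 1
  refine ⟨LinearEquiv.transvection h, fun hL => hi ?_⟩
  simpa [LinearMap.transvection.apply] using congrFun hL j

section Translations

variable {n : ℕ}

theorem addRight_mem_sigmaSub_iff {W : Submodule (ZMod 2) (V n)} {v : V n} :
    Equiv.addRight v ∈ sigmaSub n W ↔ v ∈ W := by
  refine ⟨fun ⟨u, hu, h⟩ => ?_, fun hv => ⟨v, hv, fun _ => rfl⟩⟩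
  have huv : u = v := by simpa using (h 0).symm
  exact huv ▸ hu

theorem card_sigmaSub (W : Submodule (ZMod 2) (V n)) : Nat.card (sigmaSub n W) = Nat.card W := by
  refine (Nat.card_eq_of_bijective (fun w : W => ⟨Equiv.addRight w.1, w.1, w.2, fun _ => rfl⟩)
    ⟨fun w w' h => Subtype.ext ?_,
      fun ⟨g, v, hv, hg⟩ => ⟨⟨v, hv⟩, Subtype.ext (Equiv.ext ?_)⟩⟩).symm
  · simpa using congrArg (fun g : sigmaSub n W => (g : Perm (V n)) 0) h
  · exact fun x => (hg x).symm

theorem card_V : Nat.card (V n) = 2 ^ n := by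
  simp

theorem card_T : Nat.card (T n) = 2 ^ n := by
  rw [T, card_sigmaSub, Nat.card_congr Submodule.topEquiv.toEquiv, card_V]

def translationSubmodule (M : Subgroup (Perm (V n))) : Submodule (ZMod 2) (V n) :=
  AddSubgroup.toZModSubmodule 2
    { carrier := {v | Equiv.addRight v ∈ M}
      zero_mem' := by simp
      add_mem' := fun {a b} ha hb => by
        simpa [Equiv.addRight_add] using M.mul_mem hb ha
      neg_mem' := fun {a} ha => (ZModModule.neg_eq_self a).symm ▸ ha }

theorem sigmaSub_translationSubmodule {M : Subgroup (Perm (V n))} (hM : M ≤ T n) :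
    sigmaSub n (translationSubmodule M) = M := by
  ext g
  refine ⟨fun ⟨v, hv, hg⟩ => (Equiv.ext hg : g = Equiv.addRight v) ▸ hv, fun hg => ?_⟩
  obtain ⟨v, -, hgv⟩ := hM hg
  exact ⟨v, show Equiv.addRight v ∈ M from (Equiv.ext hgv : g = Equiv.addRight v) ▸ hg, hgv⟩

theorem card_translationSubmodule_mul_relIndex {M : Subgroup (Perm (V n))} (hM : M ≤ T n) :
    Nat.card (translationSubmodule M) * M.relIndex (T n) = 2 ^ n := by
  rw [← card_sigmaSub, sigmaSub_translationSubmodule hM]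
  have h := Subgroup.relIndex_mul_relIndex _ _ _ bot_le hM
  rwa [Subgroup.relIndex_bot_left, Subgroup.relIndex_bot_left, card_T] at h

theorem mem_centralizer_sigmaSub_iff {W : Submodule (ZMod 2) (V n)} {g : Perm (V n)} :
    g ∈ Subgroup.centralizer (sigmaSub n W : Set (Perm (V n))) ↔
      ∀ w ∈ W, ∀ x, g (x + w) = g x + w := by
  rw [Subgroup.mem_centralizer_iff]
  constructor
  · intro h w hw x
    simpa [Perm.mul_apply] using (congrArg (· x) (h _ (addRight_mem_sigmaSub_iff.2 hw))).symm
  · rintro h _ ⟨w, hw, hmw⟩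
    ext x
    simp [Perm.mul_apply, hmw, h w hw]

end Translations

section HyperplaneCentralizer

variable {n : ℕ} {f : Dual (ZMod 2) (V n)} {v₀ : V n} {g : Perm (V n)}

theorem apply_sub_sub_apply_zero_mem_ker (hv₀ : f v₀ = 1)
    (hg : g ∈ Subgroup.centralizer (sigmaSub n (ker f) : Set (Perm (V n)))) :
    g v₀ - v₀ - g 0 ∈ ker f := by
  have hg' := funext (apply_eq_add_smul_add_of_forall_add hv₀ (mem_centralizer_sigmaSub_iff.1 hg))
  exact apply_eq_zero_of_injective_add_smul_add (c := g 0) (hg' ▸ g.injective)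

theorem apply_eq_transvection_add (hv₀ : f v₀ = 1)
    (hg : g ∈ Subgroup.centralizer (sigmaSub n (ker f) : Set (Perm (V n)))) (x : V n) :
    g x =
      LinearEquiv.transvection (mem_ker.1 (apply_sub_sub_apply_zero_mem_ker hv₀ hg)) x + g 0 :=
  apply_eq_add_smul_add_of_forall_add hv₀ (mem_centralizer_sigmaSub_iff.1 hg) x

theorem centralizer_sigmaSub_ker_le_AGL (hv₀ : f v₀ = 1) :
    Subgroup.centralizer (sigmaSub n (ker f) : Set (Perm (V n))) ≤ AGL n :=
  fun _ hg => ⟨_, _, apply_eq_transvection_add hv₀ hg⟩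

theorem transvection_trans_addRight_mem_centralizer {d : V n} (hd : f d = 0) (c : V n) :
    (LinearEquiv.transvection hd).toEquiv.trans (Equiv.addRight c) ∈
      Subgroup.centralizer (sigmaSub n (ker f) : Set (Perm (V n))) := by
  refine mem_centralizer_sigmaSub_iff.2 fun w hw x => ?_
  show x + w + f (x + w) • d + c = x + f x • d + c + w
  rw [map_add, mem_ker.1 hw, add_zero]
  abel

def centralizerSigmaSubKerEquiv (hv₀ : f v₀ = 1) :
    Subgroup.centralizer (sigmaSub n (ker f) : Set (Perm (V n))) ≃ ker f × V n where
  toFun g := (⟨g.1 v₀ - v₀ - g.1 0, apply_sub_sub_apply_zero_mem_ker hv₀ g.2⟩, g.1 0)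
  invFun p := ⟨_, transvection_trans_addRight_mem_centralizer p.1.2 p.2⟩
  left_inv g := Subtype.ext (Equiv.ext fun x => (apply_eq_transvection_add hv₀ g.2 x).symm)
  right_inv := fun ⟨⟨d, hd⟩, c⟩ =>
    Prod.ext (Subtype.ext (show v₀ + f v₀ • d + c - v₀ - (0 + f 0 • d + c) = d by
      rw [hv₀, map_zero, one_smul, zero_smul]
      abel)) (show 0 + f 0 • d + c = c by simp)

theorem card_centralizer_sigmaSub_ker (hv₀ : f v₀ = 1) :
    Nat.card (Subgroup.centralizer (sigmaSub n (ker f) : Set (Perm (V n)))) =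
      Nat.card (ker f) * 2 ^ n := by
  rw [Nat.card_congr (centralizerSigmaSubKerEquiv hv₀), Nat.card_prod, card_V]

end HyperplaneCentralizer

theorem exists_mem_AGL_not_mem_centralizer_sigmaSub {n : ℕ} (hn : 1 < n)
    {W : Submodule (ZMod 2) (V n)} (hW : 1 < Nat.card W) :
    ∃ g ∈ AGL n, g ∉ Subgroup.centralizer (sigmaSub n W : Set (Perm (V n))) := by
  have : Nontrivial W := Finite.one_lt_card_iff_nontrivial.1 hW
  obtain ⟨⟨w, hwW⟩, hw⟩ := exists_ne (0 : W)
  have : Nontrivial (Fin n) := Fin.nontrivial_iff_two_le.2 hn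
  obtain ⟨L, hL⟩ := Pi.exists_linearEquiv_apply_ne (w := w) (by simpa using hw)
  refine ⟨L.toEquiv, ⟨L, 0, fun x => (add_zero _).symm⟩, fun hg => hL ?_⟩
  simpa using mem_centralizer_sigmaSub_iff.1 hg w hwW 0

/-- If `M` is a maximal subgroup of `T` (a subgroup of index `2` in `T`), then
`C_{Sym(V)}(M)` is a proper subgroup of `AGL(V)` of order `2^(2n-1)`. -/
theorem centralizer_of_maximal_subgroup_of_translations
    (n : ℕ) (hn : 2 < n)
    (M : Subgroup (Equiv.Perm (V n))) (hMT : M ≤ T n)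
    (hidx : M.relIndex (T n) = 2) :
    Subgroup.centralizer (M : Set (Equiv.Perm (V n))) < AGL n ∧
      Nat.card (Subgroup.centralizer (M : Set (Equiv.Perm (V n)))) = 2 ^ (2 * n - 1) := by
  set W := translationSubmodule M
  have hM : sigmaSub n W = M := sigmaSub_translationSubmodule hMT
  have hcardW : Nat.card W * 2 = 2 ^ n := by
    simpa only [hidx] using card_translationSubmodule_mul_relIndex hMT
  have hquot : Nat.card (V n ⧸ W) = 2 := by
    have h := Submodule.card_eq_card_quotient_mul_card W
    rw [card_V, ← hcardW] at h
    exact (Nat.eq_of_mul_eq_mul_left Nat.card_pos h).symm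
  obtain ⟨f, hf, hker⟩ := Submodule.exists_surjective_dual_ker_eq_of_card_quotient_eq_two hquot
  have hcardK : Nat.card (ker f) = 2 ^ (n - 1) := by
    refine Nat.eq_of_mul_eq_mul_right two_pos ?_
    rw [hker, hcardW, ← pow_succ, Nat.sub_add_cancel (by omega)]
  obtain ⟨v₀, hv₀⟩ := hf 1
  rw [← hM, ← hker]
  refine ⟨SetLike.lt_iff_le_and_exists.2 ⟨centralizer_sigmaSub_ker_le_AGL hv₀,
    exists_mem_AGL_not_mem_centralizer_sigmaSub (by omega) ?_⟩, ?_⟩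
  · rw [hcardK]
    exact Nat.one_lt_two_pow (by omega)
  · rw [card_centralizer_sigmaSub_ker hv₀, hcardK, ← pow_add]
    congr 1
    omega
end

section
/- Let n > 2, let V = 𝔽₂ⁿ, and let W ≤ V be a subspace with dim(W) = n − 2. Let φ ∈ Sym(V) be an involution which centralises σ_W and which does not fix setwise any of the four cosets of W in V. Then φ ∈ AGL(V), i.e. φ is an affine transformation of V. -/
/-!
Write `f x = φ x + x` for the displacement of `φ`. Commuting with `σ_W` makes `f` constant on
cosets of `W`, the involution property gives `f ∘ φ = f`, and not fixing a coset means
`f x ∉ W`. With `a = f 0`, the subspace `U = W + ⟨a⟩` has index at most two; `f = a` on `U`,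
and `f` is constant off `U` because `φ` moves each coset of `W` outside `U` to the other one.
So `f - f 0` is additive, i.e. `φ` is affine.
-/

open Equiv

open Function Submodule

theorem finrank_quotient_sup_span_le_one_of_notMem {K E : Type*} [DivisionRing K]
    [AddCommGroup E] [Module K E] [FiniteDimensional K E] {W : Submodule K E} {a : E} (ha : a ∉ W)
    (hcodim : Module.finrank K (E ⧸ W) ≤ 2) : Module.finrank K (E ⧸ (W ⊔ K ∙ a)) ≤ 1 := by
  have := LinearEquiv.finrank_quotient_sup_span_singleton ha
  omega

section ZModTwo

variable {E : Type*} [AddCommGroup E] [Module (ZMod 2) E]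

open ZModModule in
theorem mem_sup_span_singleton_iff_zmod_two {U : Submodule (ZMod 2) E} {x y : E} :
    y ∈ U ⊔ span (ZMod 2) {x} ↔ y ∈ U ∨ y + x ∈ U := by
  constructor
  · intro hy
    obtain ⟨u, hu, _, hs, rfl⟩ := mem_sup.mp hy
    obtain ⟨t, rfl⟩ := mem_span_singleton.mp hs
    obtain rfl | rfl : t = 0 ∨ t = 1 := (by decide : ∀ s : ZMod 2, s = 0 ∨ s = 1) t
    · simp [hu]
    · right
      simpa [add_assoc, add_self] using hu
  · rintro (hy | hy)
    · exact mem_sup_left hy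
    · simpa [add_assoc, add_self] using
        add_mem (mem_sup_left hy) (mem_sup_right (mem_span_singleton_self x))

theorem add_mem_of_notMem_of_finrank_quotient_le_one [FiniteDimensional (ZMod 2) E]
    {U : Submodule (ZMod 2) E} (hU : Module.finrank (ZMod 2) (E ⧸ U) ≤ 1) {x y : E}
    (hx : x ∉ U) (hy : y ∉ U) : x + y ∈ U := by
  have hcodim := LinearEquiv.finrank_quotient_sup_span_singleton hx
  have htop : U ⊔ span (ZMod 2) {x} = ⊤ := (sup_span_singleton_eq_top_iff hx).mpr (by omega)
  have hy' : y ∈ U ⊔ span (ZMod 2) {x} := htop ▸ mem_top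
  rw [mem_sup_span_singleton_iff_zmod_two, add_comm] at hy'
  exact hy'.resolve_left hy

end ZModTwo

section Displacement

open ZModModule

variable {E : Type*} [AddCommGroup E] [Module (ZMod 2) E] {W : Submodule (ZMod 2) E} {φ : E → E}

theorem displacement_eq_of_add_mem (hW : ∀ w ∈ W, ∀ x, φ (x + w) = φ x + w) {x y : E}
    (h : x + y ∈ W) : φ y + y = φ x + x := by
  have hy : y = x + (x + y) := by rw [← add_assoc, add_self, zero_add]
  rw [hy, hW _ h, add_add_add_comm, add_self, add_zero]

theorem image_setOf_sub_mem_eq_of_displacement_mem (hφ : Involutive φ)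
    (hW : ∀ w ∈ W, ∀ x, φ (x + w) = φ x + w) {v : E} (hv : φ v + v ∈ W) :
    φ '' {x | x - v ∈ W} = {x | x - v ∈ W} := by
  have hmaps : Set.MapsTo φ {x | x - v ∈ W} {x | x - v ∈ W} := by
    intro x (hx : x - v ∈ W)
    rw [sub_eq_add] at hx
    show φ x - v ∈ W
    rw [sub_eq_add, ← add_add_add_cancel (φ x) x v,
      displacement_eq_of_add_mem hW (x := v) (by rwa [add_comm])]
    exact add_mem hv hx
  exact Set.SurjOn.image_eq_of_mapsTo (fun y hy => ⟨φ y, hmaps hy, hφ y⟩) hmaps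

variable (hφ : Involutive φ) (hW : ∀ w ∈ W, ∀ x, φ (x + w) = φ x + w)
include hφ hW

theorem displacement_eq_of_mem_sup_span {x : E} (hx : x ∈ W ⊔ span (ZMod 2) {φ 0}) :
    φ x + x = φ 0 := by
  rcases mem_sup_span_singleton_iff_zmod_two.mp hx with hx | hx
  · simpa using displacement_eq_of_add_mem hW (x := 0) (by simpa using hx)
  · simpa [hφ 0] using displacement_eq_of_add_mem hW (x := φ 0) (by rwa [add_comm])

variable [FiniteDimensional (ZMod 2) E] (hfree : ∀ x, φ x + x ∉ W)
  (hcodim : Module.finrank (ZMod 2) (E ⧸ W) ≤ 2)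
include hfree hcodim

theorem displacement_eq_of_notMem_sup_span {x y : E} (hx : x ∉ W ⊔ span (ZMod 2) {φ 0})
    (hy : y ∉ W ⊔ span (ZMod 2) {φ 0}) : φ y + y = φ x + x := by
  have hU := finrank_quotient_sup_span_le_one_of_notMem (by simpa using hfree 0) hcodim
  -- `φ x` lies in the other coset of `W` outside `W ⊔ span {φ 0}`, and `φ (φ x) + φ x = φ x + x`.
  have hφx : φ x ∉ W ⊔ span (ZMod 2) {φ 0} := by
    intro h
    have hx' : x = φ x + φ 0 := by
      rw [← displacement_eq_of_mem_sup_span hφ hW h, hφ x, add_left_comm, add_self, add_zero]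
    exact hx (hx' ▸ add_mem h (mem_sup_right (mem_span_singleton_self _)))
  have hfx : φ x + x + φ 0 ∈ W := (mem_sup_span_singleton_iff_zmod_two.mp
    (add_mem_of_notMem_of_finrank_quotient_le_one hU hφx hx)).resolve_left (hfree x)
  rcases mem_sup_span_singleton_iff_zmod_two.mp
    (add_mem_of_notMem_of_finrank_quotient_le_one hU hx hy) with hxy | hxy
  · exact displacement_eq_of_add_mem hW hxy
  · have hφxy : φ x + y ∈ W := by
      have h := add_mem hfx hxy
      rwa [show φ x + x + φ 0 + (x + y + φ 0) = φ x + y + (x + x) + (φ 0 + φ 0) by abel,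
        add_self, add_self, add_zero, add_zero] at h
    rw [displacement_eq_of_add_mem hW hφxy, hφ x, add_comm]

theorem map_add_add_map_zero (x y : E) : φ (x + y) + φ 0 = φ x + φ y := by
  set U := W ⊔ span (ZMod 2) {φ 0}
  have hU := finrank_quotient_sup_span_le_one_of_notMem (by simpa using hfree 0) hcodim
  have hmem {z : E} (hz : z ∈ U) : φ z + z = φ 0 := displacement_eq_of_mem_sup_span hφ hW hz
  have hnotMem {z z' : E} (hz : z ∉ U) (hz' : z' ∉ U) : φ z' + z' = φ z + z :=
    displacement_eq_of_notMem_sup_span hφ hW hfree hcodim hz hz'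
  suffices φ (x + y) + (x + y) + φ 0 = (φ x + x) + (φ y + y) by
    apply add_right_cancel (b := x + y)
    calc φ (x + y) + φ 0 + (x + y) = φ (x + y) + (x + y) + φ 0 := by abel
      _ = (φ x + x) + (φ y + y) := this
      _ = φ x + φ y + (x + y) := by abel
  by_cases hx : x ∈ U <;> by_cases hy : y ∈ U
  · rw [hmem (add_mem hx hy), hmem hx, hmem hy]
  · rw [hnotMem hy (by rwa [add_mem_cancel_left hx]), hmem hx, add_comm]
  · rw [hnotMem hx (by rwa [add_mem_cancel_right hy]), hmem hy]
  · rw [hmem (add_mem_of_notMem_of_finrank_quotient_le_one hU hx hy), hnotMem hx hy,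
      add_self, add_self]

end Displacement

theorem mem_AGL_of_map_add_add_map_zero {n : ℕ} {φ : Perm (V n)}
    (h : ∀ x y, φ (x + y) + φ 0 = φ x + φ y) : φ ∈ AGL n := by
  let L : V n →+ V n :=
    { toFun := fun x => φ x + φ 0
      map_zero' := ZModModule.add_self _
      map_add' := fun x y => by
        rw [h, add_add_add_comm, ZModModule.add_self, add_zero] }
  have hL : Bijective L := (Equiv.addRight (φ 0)).bijective.comp φ.bijective
  refine ⟨LinearEquiv.ofBijective (L.toZModLinearMap 2) hL, φ 0, fun x => ?_⟩
  change φ x = φ x + φ 0 + φ 0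
  rw [add_assoc, ZModModule.add_self, add_zero]

theorem map_add_of_mem_centralizer_sigmaSub {n : ℕ} {W : Submodule (ZMod 2) (V n)}
    {φ : Perm (V n)} (hφ : φ ∈ Subgroup.centralizer (sigmaSub n W : Set (Perm (V n))))
    {w : V n} (hw : w ∈ W) (x : V n) : φ (x + w) = φ x + w :=
  (DFunLike.congr_fun (Subgroup.mem_centralizer_iff.mp hφ (Equiv.addRight w) ⟨w, hw, fun _ => rfl⟩)
    x).symm

theorem involution_centralizing_sigmaW_not_fixing_cosets_mem_AGL_general
    (n : ℕ)
    (W : Submodule (ZMod 2) (V n)) (hdim : Module.finrank (ZMod 2) W = n - 2)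
    (φ : Equiv.Perm (V n)) (hinv : φ * φ = 1)
    (hcent : φ ∈ Subgroup.centralizer (sigmaSub n W : Set (Equiv.Perm (V n))))
    (hcosets : ∀ v : V n, (fun x => φ x) '' {x : V n | x - v ∈ W} ≠ {x : V n | x - v ∈ W}) :
    φ ∈ AGL n := by
  have hφ : Involutive φ := fun x => DFunLike.congr_fun hinv x
  have hW := fun w (hw : w ∈ W) => map_add_of_mem_centralizer_sigmaSub hcent hw
  have hfree (x : V n) : φ x + x ∉ W := fun h =>
    hcosets x (image_setOf_sub_mem_eq_of_displacement_mem hφ hW h)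
  have hcodim : Module.finrank (ZMod 2) (V n ⧸ W) ≤ 2 := by
    have := W.finrank_quotient_add_finrank
    rw [Module.finrank_fin_fun] at this
    omega
  exact mem_AGL_of_map_add_add_map_zero (map_add_add_map_zero hφ hW hfree hcodim)

/-- An involution of `Sym(V)` centralising `σ_W`, where `dim W = n - 2`, which does
not fix setwise any of the cosets of `W` in `V`, is an affine transformation. -/
theorem involution_centralizing_sigmaW_not_fixing_cosets_mem_AGL
    (n : ℕ) (hn : 2 < n)
    (W : Submodule (ZMod 2) (V n)) (hdim : Module.finrank (ZMod 2) W = n - 2)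
    (φ : Equiv.Perm (V n)) (hinv : φ * φ = 1) (hne : φ ≠ 1)
    (hcent : φ ∈ Subgroup.centralizer (sigmaSub n W : Set (Equiv.Perm (V n))))
    (hcosets : ∀ v : V n, (fun x => φ x) '' {x : V n | x - v ∈ W} ≠ {x : V n | x - v ∈ W}) :
    φ ∈ AGL n :=
  involution_centralizing_sigmaW_not_fixing_cosets_mem_AGL_general n W hdim φ hinv hcent hcosets
end
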